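/- Let p be a prime and L/K a finite Galois extension of number fields whose Galois group G is a p-group. Let F be an intermediate field with F/K Galois, and set H = Gal(L/F), so Gal(F/K) ≅ G/H. If 𝓔_L ≅ 𝔽_p[G]^t ⊕ N with N a torsion 𝔽_p[G]-module, and 𝓔_F ≅ 𝔽_p[G/H]^{t'} ⊕ N' with N' a torsion 𝔽_p[G/H]-module, then t' ≥ t. (In other words, the Minkowski free rank does not increase as one goes up a tower of Galois p-extensions.) -/

import Mathlib

/-! In `𝔽_p[G]` with `G` a `p`-group, every nonzero left ideal `I` contains the norm element
`ν = ∑ g`: `I` is a finite `p`-group on which `G` acts, so it has a nonzero `G`-fixed point, and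
the fixed points of `𝔽_p[G]` are the multiples of `ν`. Hence `ν` kills every torsion module, and
`ν • (𝔽_p[G]^t ⊕ N) ≅ 𝔽_p^t` has `p^t` elements. On `𝓔_L` the element `ν` acts as the norm
`N_{L/K} = N_{F/K} ∘ N_{L/F}`, so `ν 𝓔_L` lies in the image of `ν 𝓔_F` under `𝓔_F → 𝓔_L`,
whence `p^t ≤ p^{t'}`. -/

open NumberField

/-- `𝓔_L`: the units of the ring of integers modulo `p`-th powers. -/
abbrev UnitsModP (p : ℕ) (F : Type*) [Field F] [NumberField F] : Type _ :=
  (𝓞 F)ˣ ⧸ (powMonoidHom p : (𝓞 F)ˣ →* (𝓞 F)ˣ).range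

/-- A module over a ring is torsion if every element is killed by a nonzero scalar. -/
def IsTorsionModule (R M : Type*) [Semiring R] [AddCommMonoid M] [Module R M] : Prop :=
  ∀ m : M, ∃ r : R, r ≠ 0 ∧ r • m = 0

namespace MonoidAlgebra

section Semiring

variable (k G : Type*) [Semiring k] [Fintype G]

noncomputable def normElement : MonoidAlgebra k G :=
  ∑ g : G, single g 1

variable {k G}

@[simp]
lemma coeff_normElement (g : G) : (normElement k G).coeff g = 1 := by
  classical
  simp [normElement, coeff_sum, Finset.sum_apply', Finsupp.single_apply]

variable [Group G]

lemma normElement_mul (a : MonoidAlgebra k G) :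
    normElement k G * a = (∑ g : G, a.coeff g) • normElement k G := by
  ext y
  rw [coeff_smul_apply, coeff_normElement, smul_eq_mul, mul_one, normElement, Finset.sum_mul,
    coeff_sum, Finset.sum_apply']
  simp only [coeff_single_mul_apply, one_mul]
  exact Fintype.sum_equiv ((Equiv.inv G).trans (Equiv.mulRight y)) _ _ fun _ ↦ rfl

lemma eq_coeff_one_smul_normElement {x : MonoidAlgebra k G} (hx : ∀ g : G, of k G g * x = x) :
    x = x.coeff 1 • normElement k G := by
  ext g
  have := congrArg (fun z : MonoidAlgebra k G ↦ z.coeff g) (hx g)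
  simp only [of_apply, coeff_single_mul_apply, inv_mul_cancel, one_mul] at this
  simp [this]

end Semiring

variable {p : ℕ} [Fact p.Prime] {k G : Type*} [Field k] [CharP k p] [Group G] [Fintype G]

theorem exists_mul_eq_normElement [Finite k] (hG : IsPGroup p G) {r : MonoidAlgebra k G}
    (hr : r ≠ 0) : ∃ s, s * r = normElement k G := by
  let I := Submodule.span (MonoidAlgebra k G) {r}
  let : DistribMulAction G I := DistribMulAction.compHom I (of k G)
  have : Finite (MonoidAlgebra k G) :=
    Finite.of_equiv _ (Finsupp.equivFunOnFinite.symm.trans coeffEquiv.symm)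
  have hpI : p ∣ Nat.card I := by
    have hr' : addOrderOf (⟨r, Submodule.mem_span_singleton_self r⟩ : I) = p := by
      refine addOrderOf_eq_prime (Subtype.ext ?_) (by simpa [Subtype.ext_iff] using hr)
      simp [← Nat.cast_smul_eq_nsmul k]
    exact hr' ▸ addOrderOf_dvd_natCard _
  obtain ⟨x, hx, hx0⟩ := hG.exists_fixed_point_of_prime_dvd_card_of_fixed_point I hpI
    (a := 0) fun g ↦ smul_zero g
  obtain ⟨s, hs⟩ := Submodule.mem_span_singleton.1 x.2
  have hxν : (x : MonoidAlgebra k G) = x.1.coeff 1 • normElement k G :=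
    eq_coeff_one_smul_normElement fun g ↦ congrArg Subtype.val (hx g)
  set c := x.1.coeff 1
  have hc : c ≠ 0 := fun hc ↦ hx0 (Subtype.ext (by rw [hxν, hc, zero_smul]; rfl))
  refine ⟨c⁻¹ • s, ?_⟩
  rw [smul_mul_assoc, ← smul_eq_mul, hs, hxν, smul_smul, inv_mul_cancel₀ hc, one_smul]

theorem normElement_smul_eq_zero [Finite k] (hG : IsPGroup p G) {M : Type*} [AddCommMonoid M]
    [Module (MonoidAlgebra k G) M] (hM : IsTorsionModule (MonoidAlgebra k G) M) (m : M) :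
    normElement k G • m = 0 := by
  obtain ⟨r, hr, hrm⟩ := hM m
  obtain ⟨s, hs⟩ := exists_mul_eq_normElement hG hr
  rw [← hs, mul_smul, hrm, smul_zero]

lemma range_normElement_smul_prod (hG : IsPGroup p G) [Finite k] (ι : Type*) {N : Type*}
    [AddCommMonoid N] [Module (MonoidAlgebra k G) N] (hN : IsTorsionModule (MonoidAlgebra k G) N) :
    Set.range (normElement k G • · : (ι → MonoidAlgebra k G) × N → _) =
      Set.range fun c : ι → k ↦ ((fun i ↦ c i • normElement k G), (0 : N)) := by
  ext x
  constructor
  · rintro ⟨⟨a, n⟩, rfl⟩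
    refine ⟨fun i ↦ ∑ g : G, (a i).coeff g, ?_⟩
    ext i : 2
    · simp [normElement_mul]
    · simp [normElement_smul_eq_zero hG hN]
  · rintro ⟨c, rfl⟩
    refine ⟨((fun i ↦ c i • 1), 0), ?_⟩
    ext i : 2 <;> simp

theorem card_range_normElement_smul (hG : IsPGroup p G) [Finite k] {ι M N : Type*} [Finite ι]
    [AddCommMonoid M] [Module (MonoidAlgebra k G) M]
    [AddCommMonoid N] [Module (MonoidAlgebra k G) N] (hN : IsTorsionModule (MonoidAlgebra k G) N)
    (e : M ≃ₗ[MonoidAlgebra k G] (ι → MonoidAlgebra k G) × N) :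
    Nat.card (Set.range (normElement k G • · : M → M)) = Nat.card k ^ Nat.card ι := by
  have hinj : Function.Injective fun c : ι → k ↦ ((fun i ↦ c i • normElement k G), (0 : N)) :=
    fun c c' h ↦ funext fun i ↦ by
      simpa using congrArg (fun x : (ι → MonoidAlgebra k G) × N ↦ (x.1 i).coeff 1) h
  have himage :
      e '' Set.range (normElement k G • · : M → M) = Set.range (normElement k G • ·) := by
    rw [← Set.range_comp, ← e.surjective.range_comp]
    simp [Function.comp_def]
  rw [← Nat.card_image_of_injective e.injective, himage, range_normElement_smul_prod hG ι hN,
    Nat.card_range_of_injective hinj, Nat.card_fun]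

end MonoidAlgebra


namespace RingOfIntegers

theorem algebraMap_norm_eq_prod (K : Type*) {E : Type*} [Field K] [Field E] [Algebra K E]
    [FiniteDimensional K E] [IsGalois K E] (x : 𝓞 E) :
    algebraMap (𝓞 K) (𝓞 E) (norm K x) =
      ∏ σ : E ≃ₐ[K] E, RingOfIntegers.mapRingHom (σ : E →+* E) x := by
  ext
  rw [coe_algebraMap_norm, Algebra.norm_eq_prod_automorphisms]
  simp

end RingOfIntegers

namespace UnitsModP

open MonoidAlgebra

def IsGaloisAction (p : ℕ) (K E : Type*) [Field K] [Field E] [NumberField E] [Algebra K E]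
    [Module (MonoidAlgebra (ZMod p) (E ≃ₐ[K] E)) (Additive (UnitsModP p E))] : Prop :=
  ∀ (σ : E ≃ₐ[K] E) (u u' : (𝓞 E)ˣ),
    algebraMap (𝓞 E) E (u' : 𝓞 E) = σ (algebraMap (𝓞 E) E (u : 𝓞 E)) →
    MonoidAlgebra.single σ (1 : ZMod p) • Additive.ofMul (QuotientGroup.mk u : UnitsModP p E)
      = Additive.ofMul (QuotientGroup.mk u' : UnitsModP p E)

variable {p : ℕ}

noncomputable def map {F L : Type*} [Field F] [Field L] [NumberField F] [NumberField L]
    (f : 𝓞 F →+* 𝓞 L) : UnitsModP p F →* UnitsModP p L :=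
  QuotientGroup.map _ _ (Units.map f) <| by
    rintro _ ⟨u, rfl⟩
    exact ⟨Units.map f u, by simp⟩

theorem normElement_smul_mk {K E : Type*} [Field K] [Field E] [NumberField E] [Algebra K E]
    [FiniteDimensional K E] [IsGalois K E]
    [Module (MonoidAlgebra (ZMod p) (E ≃ₐ[K] E)) (Additive (UnitsModP p E))]
    (hE : IsGaloisAction p K E) (u : (𝓞 E)ˣ) :
    normElement (ZMod p) (E ≃ₐ[K] E) • Additive.ofMul (QuotientGroup.mk u : UnitsModP p E) =
      Additive.ofMul (QuotientGroup.mk <|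
        Units.map (algebraMap (𝓞 K) (𝓞 E)).toMonoidHom (Units.map (RingOfIntegers.norm K) u)) := by
  have hnorm :
      Units.map (algebraMap (𝓞 K) (𝓞 E)).toMonoidHom (Units.map (RingOfIntegers.norm K) u) =
        ∏ σ : E ≃ₐ[K] E, Units.map (RingOfIntegers.mapRingHom (σ : E →+* E)).toMonoidHom u :=
    Units.ext <| by
      simpa [Units.coe_prod] using RingOfIntegers.algebraMap_norm_eq_prod K (u : 𝓞 E)
  rw [hnorm, QuotientGroup.mk_prod, ofMul_prod, normElement, Finset.sum_smul]
  exact Finset.sum_congr rfl fun σ _ ↦ hE σ _ _ rfl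

theorem range_normElement_smul_subset_image_map {K F L : Type*} [Field K] [Field F] [Field L]
    [NumberField F] [NumberField L] [Algebra K F] [Algebra K L] [Algebra F L]
    [IsScalarTower K F L] [IsGalois K L] [IsGalois K F] [FiniteDimensional K F]
    [FiniteDimensional K L]
    [Module (MonoidAlgebra (ZMod p) (L ≃ₐ[K] L)) (Additive (UnitsModP p L))]
    [Module (MonoidAlgebra (ZMod p) (F ≃ₐ[K] F)) (Additive (UnitsModP p F))]
    (hL : IsGaloisAction p K L) (hF : IsGaloisAction p K F) :
    Set.range (normElement (ZMod p) (L ≃ₐ[K] L) • · : Additive (UnitsModP p L) → _) ⊆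
      MonoidHom.toAdditive (map (algebraMap (𝓞 F) (𝓞 L))) ''
        Set.range (normElement (ZMod p) (F ≃ₐ[K] F) • ·) := by
  have : FiniteDimensional F L := Module.Finite.right K F L
  rintro _ ⟨y, rfl⟩
  obtain ⟨u, hu⟩ := QuotientGroup.mk_surjective y.toMul
  obtain rfl : y = Additive.ofMul (QuotientGroup.mk u) := hu.symm
  refine ⟨_, ⟨Additive.ofMul (QuotientGroup.mk (Units.map (RingOfIntegers.norm F) u)), rfl⟩, ?_⟩
  dsimp only
  rw [normElement_smul_mk hF, normElement_smul_mk hL]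
  refine congrArg (fun v ↦ Additive.ofMul (QuotientGroup.mk v : UnitsModP p L)) (Units.ext ?_)
  simp [← IsScalarTower.algebraMap_apply, RingOfIntegers.norm_norm]

end UnitsModP

theorem stmt_6_general (p : ℕ) [Fact p.Prime] (K F L : Type) [Field K] [Field F] [Field L]
    [NumberField F] [NumberField L]
    [Algebra K F] [Algebra K L] [Algebra F L] [IsScalarTower K F L]
    [IsGalois K L] [IsGalois K F] [FiniteDimensional K L]
    (hpgroup : IsPGroup p (L ≃ₐ[K] L))
    -- the `𝔽_p[Gal(L/K)]`-module structure on `𝓔_L`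
    [Module (MonoidAlgebra (ZMod p) (L ≃ₐ[K] L)) (Additive (UnitsModP p L))]
    (hcompatL : ∀ (σ : L ≃ₐ[K] L) (u u' : (𝓞 L)ˣ),
      algebraMap (𝓞 L) L (u' : 𝓞 L) = σ (algebraMap (𝓞 L) L (u : 𝓞 L)) →
      MonoidAlgebra.single σ (1 : ZMod p) • Additive.ofMul (QuotientGroup.mk u : UnitsModP p L)
        = Additive.ofMul (QuotientGroup.mk u' : UnitsModP p L))
    -- the `𝔽_p[Gal(F/K)]`-module structure on `𝓔_F`
    [Module (MonoidAlgebra (ZMod p) (F ≃ₐ[K] F)) (Additive (UnitsModP p F))]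
    (hcompatF : ∀ (σ : F ≃ₐ[K] F) (u u' : (𝓞 F)ˣ),
      algebraMap (𝓞 F) F (u' : 𝓞 F) = σ (algebraMap (𝓞 F) F (u : 𝓞 F)) →
      MonoidAlgebra.single σ (1 : ZMod p) • Additive.ofMul (QuotientGroup.mk u : UnitsModP p F)
        = Additive.ofMul (QuotientGroup.mk u' : UnitsModP p F))
    -- decompositions
    (t : ℕ) (N : Type) [AddCommGroup N]
    [Module (MonoidAlgebra (ZMod p) (L ≃ₐ[K] L)) N]
    (hN : IsTorsionModule (MonoidAlgebra (ZMod p) (L ≃ₐ[K] L)) N)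
    (e : Additive (UnitsModP p L) ≃ₗ[MonoidAlgebra (ZMod p) (L ≃ₐ[K] L)]
      (Fin t → MonoidAlgebra (ZMod p) (L ≃ₐ[K] L)) × N)
    (t' : ℕ) (N' : Type) [AddCommGroup N']
    [Module (MonoidAlgebra (ZMod p) (F ≃ₐ[K] F)) N']
    (hN' : IsTorsionModule (MonoidAlgebra (ZMod p) (F ≃ₐ[K] F)) N')
    (e' : Additive (UnitsModP p F) ≃ₗ[MonoidAlgebra (ZMod p) (F ≃ₐ[K] F)]
      (Fin t' → MonoidAlgebra (ZMod p) (F ≃ₐ[K] F)) × N') :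
    t ≤ t' := by
  have : FiniteDimensional K F := Module.Finite.left K F L
  have hpgroupF : IsPGroup p (F ≃ₐ[K] F) :=
    hpgroup.of_surjective _ (AlgEquiv.restrictNormalHom_surjective L)
  have hp : p.Prime := Fact.out
  have hcardL := MonoidAlgebra.card_range_normElement_smul hpgroup hN e
  have hcardF := MonoidAlgebra.card_range_normElement_smul hpgroupF hN' e'
  rw [Nat.card_zmod, Nat.card_fin] at hcardL hcardF
  have hfinF := Nat.finite_of_card_ne_zero (hcardF ▸ (pow_pos hp.pos t').ne')
  have hle : p ^ t ≤ p ^ t' := hcardL ▸ hcardF ▸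
    (Nat.card_mono (Set.toFinite _ |>.image _)
      (UnitsModP.range_normElement_smul_subset_image_map hcompatL hcompatF)).trans
      (Nat.card_image_le (Set.toFinite _))
  exact (Nat.pow_le_pow_iff_right hp.one_lt).1 hle

/-- Let `L/K` be a finite Galois extension of number fields whose Galois group `G` is a
`p`-group, and let `F` be an intermediate field, Galois over `K` (so
`Gal(F/K) ≅ G/H` with `H = Gal(L/F)`).  If `𝓔_L ≅ 𝔽_p[G]^t ⊕ N` with `N` torsion, and
`𝓔_F ≅ 𝔽_p[Gal(F/K)]^{t'} ⊕ N'` with `N'` torsion, then `t' ≥ t`: the Minkowski free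
rank does not increase going up the tower. -/
theorem stmt_6 (p : ℕ) [Fact p.Prime] (K F L : Type) [Field K] [Field F] [Field L]
    [NumberField K] [NumberField F] [NumberField L]
    [Algebra K F] [Algebra K L] [Algebra F L] [IsScalarTower K F L]
    [IsGalois K L] [IsGalois K F] [FiniteDimensional K L]
    (hpgroup : IsPGroup p (L ≃ₐ[K] L))
    -- the `𝔽_p[Gal(L/K)]`-module structure on `𝓔_L`
    [Module (MonoidAlgebra (ZMod p) (L ≃ₐ[K] L)) (Additive (UnitsModP p L))]
    (hcompatL : ∀ (σ : L ≃ₐ[K] L) (u u' : (𝓞 L)ˣ),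
      algebraMap (𝓞 L) L (u' : 𝓞 L) = σ (algebraMap (𝓞 L) L (u : 𝓞 L)) →
      MonoidAlgebra.single σ (1 : ZMod p) • Additive.ofMul (QuotientGroup.mk u : UnitsModP p L)
        = Additive.ofMul (QuotientGroup.mk u' : UnitsModP p L))
    -- the `𝔽_p[Gal(F/K)]`-module structure on `𝓔_F`
    [Module (MonoidAlgebra (ZMod p) (F ≃ₐ[K] F)) (Additive (UnitsModP p F))]
    (hcompatF : ∀ (σ : F ≃ₐ[K] F) (u u' : (𝓞 F)ˣ),
      algebraMap (𝓞 F) F (u' : 𝓞 F) = σ (algebraMap (𝓞 F) F (u : 𝓞 F)) →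
      MonoidAlgebra.single σ (1 : ZMod p) • Additive.ofMul (QuotientGroup.mk u : UnitsModP p F)
        = Additive.ofMul (QuotientGroup.mk u' : UnitsModP p F))
    -- decompositions
    (t : ℕ) (N : Type) [AddCommGroup N]
    [Module (MonoidAlgebra (ZMod p) (L ≃ₐ[K] L)) N]
    (hN : IsTorsionModule (MonoidAlgebra (ZMod p) (L ≃ₐ[K] L)) N)
    (e : Additive (UnitsModP p L) ≃ₗ[MonoidAlgebra (ZMod p) (L ≃ₐ[K] L)]
      (Fin t → MonoidAlgebra (ZMod p) (L ≃ₐ[K] L)) × N)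
    (t' : ℕ) (N' : Type) [AddCommGroup N']
    [Module (MonoidAlgebra (ZMod p) (F ≃ₐ[K] F)) N']
    (hN' : IsTorsionModule (MonoidAlgebra (ZMod p) (F ≃ₐ[K] F)) N')
    (e' : Additive (UnitsModP p F) ≃ₗ[MonoidAlgebra (ZMod p) (F ≃ₐ[K] F)]
      (Fin t' → MonoidAlgebra (ZMod p) (F ≃ₐ[K] F)) × N') :
    t ≤ t' :=
  stmt_6_general p K F L hpgroup hcompatL hcompatF t N hN e t' N' hN' e'
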